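/- An Archimedean vector lattice X is finite-dimensional if and only if every uo-null net in X is eventually order bounded in X. -/

import Mathlib

/-! Pairwise disjoint nonzero positive elements are linearly independent. Conversely, when `X`
has no infinite disjoint sequence, every nonzero positive element dominates an atom, a maximal
disjoint family of atoms is finite, and every positive element is a nonnegative combination of
it, so `X` is finite-dimensional.

If `X` is finite-dimensional, the sum `e` of these atoms is a strong unit, and any net `z ↓ 0`
eventually lies below `e / 2`; then `|x α| ⊓ e ≤ e / 2` forces `|x α| ≤ e / 2`. Otherwise a
disjoint sequence `(e n)` yields the net `(n, k) ↦ k • e n` over `ℕ ×ₗ ℕ`. It is uo-null, because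
for distinct `n` the elements `k • e n ⊓ y` are disjoint, but any bound on a tail bounds all
`k • e n` for a single `n`, contradicting the Archimedean property. -/

/-- A net `x : ι → X` (indexed by a preordered set `ι`) *order converges* (`o`-converges)
to `l ∈ X` if there is a net `y : Γ → X` over a nonempty directed set `Γ` which decreases
to `0` (i.e. `y` is antitone and `inf_γ y γ = 0`) such that for every `γ` there is an index
`α₀` with `|x α - l| ≤ y γ` for all `α ≥ α₀`. -/
def OConvergesTo {X : Type u} [Lattice X] [AddCommGroup X]
    {ι : Type v} [Preorder ι] (x : ι → X) (l : X) : Prop :=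
  ∃ (Γ : Type u) (_ : Preorder Γ) (_ : Nonempty Γ),
    IsDirected Γ (· ≤ ·) ∧
    ∃ y : Γ → X, Antitone y ∧ IsGLB (Set.range y) 0 ∧
      ∀ γ : Γ, ∃ α₀ : ι, ∀ α : ι, α₀ ≤ α → |x α - l| ≤ y γ

/-- A net `x : ι → X` is *unbounded order convergent* (`uo`-convergent) to `l ∈ X` if
`|x α - l| ⊓ y` order converges to `0` for every `y ≥ 0`. -/
def UOConvergesTo {X : Type u} [Lattice X] [AddCommGroup X]
    {ι : Type v} [Preorder ι] (x : ι → X) (l : X) : Prop :=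
  ∀ y : X, 0 ≤ y → OConvergesTo (fun α => |x α - l| ⊓ y) (0 : X)

/-- A net `x : ι → X` is *eventually order bounded* if there are `α₀ ∈ ι` and `b ∈ X`
with `|x α| ≤ b` for all `α ≥ α₀`. -/
def EventuallyOrderBounded {X : Type u} [Lattice X] [AddCommGroup X]
    {ι : Type v} [Preorder ι] (x : ι → X) : Prop :=
  ∃ (α₀ : ι) (b : X), ∀ α : ι, α₀ ≤ α → |x α| ≤ b

/-- A vector lattice is *Archimedean* if `n • x ≤ y` for all `n : ℕ` implies `x ≤ 0`. -/
def ArchimedeanVL (X : Type u) [Lattice X] [AddCommGroup X] : Prop :=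
  ∀ x y : X, (∀ n : ℕ, n • x ≤ y) → x ≤ 0

universe u v

theorem eq_zero_of_inf_eq_zero_of_le {X : Type*} [Lattice X] [Zero X] {a b : X}
    (hab : a ⊓ b = 0) (h : a ≤ b) : a = 0 :=
  (inf_eq_left.2 h).symm.trans hab

section LatticeOrderedGroup

variable {X : Type*} [AddCommGroup X] [Lattice X] [IsOrderedAddMonoid X]

theorem inf_add_le_inf_add_inf {a b c : X} (ha : 0 ≤ a) (hb : 0 ≤ b) (hc : 0 ≤ c) :
    a ⊓ (b + c) ≤ a ⊓ b + a ⊓ c := by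
  rw [inf_add, add_inf, add_inf]
  refine le_inf (le_inf ?_ ?_) (le_inf ?_ ?_)
  · exact inf_le_left.trans (le_add_of_nonneg_right ha)
  · exact inf_le_left.trans (le_add_of_nonneg_right hc)
  · exact inf_le_left.trans (le_add_of_nonneg_left hb)
  · exact inf_le_right

theorem inf_add_eq_zero {a b c : X} (ha : 0 ≤ a) (hb : 0 ≤ b) (hc : 0 ≤ c)
    (hab : a ⊓ b = 0) (hac : a ⊓ c = 0) : a ⊓ (b + c) = 0 :=
  le_antisymm (by simpa [hab, hac] using inf_add_le_inf_add_inf ha hb hc)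
    (le_inf ha (add_nonneg hb hc))

theorem inf_nsmul_eq_zero {a b : X} (ha : 0 ≤ a) (hb : 0 ≤ b) (hab : a ⊓ b = 0) (n : ℕ) :
    a ⊓ n • b = 0 := by
  induction n with
  | zero => simpa using ha
  | succ n ih => rw [succ_nsmul]; exact inf_add_eq_zero ha (nsmul_nonneg hb n) hb ih hab

theorem nsmul_inf_nsmul_eq_zero {a b : X} (ha : 0 ≤ a) (hb : 0 ≤ b) (hab : a ⊓ b = 0)
    (m n : ℕ) : m • a ⊓ n • b = 0 := by
  rw [inf_comm]
  refine inf_nsmul_eq_zero (nsmul_nonneg hb n) ha ?_ m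
  rw [inf_comm]
  exact inf_nsmul_eq_zero ha hb hab n

theorem inf_sum_eq_zero {ι : Type*} {s : Finset ι} {a : X} {b : ι → X} (ha : 0 ≤ a)
    (hb : ∀ i ∈ s, 0 ≤ b i) (hab : ∀ i ∈ s, a ⊓ b i = 0) : a ⊓ ∑ i ∈ s, b i = 0 := by
  classical
  induction s using Finset.induction_on with
  | empty => simpa using ha
  | insert j s hj ih =>
    simp only [Finset.mem_insert, forall_eq_or_imp] at hb hab
    rw [Finset.sum_insert hj]
    exact inf_add_eq_zero ha hb.1 (Finset.sum_nonneg hb.2) hab.1 (ih hb.2 hab.2)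

theorem add_le_of_inf_eq_zero {a b y : X} (hab : a ⊓ b = 0) (ha : a ≤ y) (hb : b ≤ y) :
    a + b ≤ y := by
  rw [← inf_add_sup, hab, zero_add]
  exact sup_le ha hb

theorem sum_le_of_pairwise_inf_eq_zero {ι : Type*} {s : Finset ι} {b : ι → X} {y : X}
    (hb : ∀ i ∈ s, 0 ≤ b i) (hby : ∀ i ∈ s, b i ≤ y) (hy : 0 ≤ y)
    (hdisj : (s : Set ι).Pairwise fun i j => b i ⊓ b j = 0) : ∑ i ∈ s, b i ≤ y := by
  classical
  induction s using Finset.induction_on with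
  | empty => simpa using hy
  | insert j s hj ih =>
    simp only [Finset.mem_insert, forall_eq_or_imp] at hb hby
    rw [Finset.coe_insert, Set.pairwise_insert] at hdisj
    rw [Finset.sum_insert hj]
    refine add_le_of_inf_eq_zero ?_ hby.1 (ih hb.2 hby.2 hdisj.1)
    exact inf_sum_eq_zero hb.1 hb.2 fun i hi => (hdisj.2 i hi fun h => hj (h ▸ hi)).1

end LatticeOrderedGroup

def HasDisjointSeq (X : Type*) [AddCommGroup X] [Lattice X] : Prop :=
  ∃ u : ℕ → X, (∀ n, 0 ≤ u n ∧ u n ≠ 0) ∧ Pairwise fun m n => u m ⊓ u n = 0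

theorem HasDisjointSeq.of_lt {X : Type*} [AddCommGroup X] [Lattice X] {u : ℕ → X}
    (hu : ∀ n, 0 ≤ u n ∧ u n ≠ 0) (hlt : ∀ m n, m < n → u m ⊓ u n = 0) : HasDisjointSeq X :=
  ⟨u, hu, fun m n hmn => hmn.lt_or_gt.elim (hlt m n) fun h => (inf_comm _ _).trans (hlt n m h)⟩

section Atoms

variable {X : Type*} [AddCommGroup X] [Lattice X] [Module ℝ X]

def IsLatticeAtom (a : X) : Prop :=
  0 ≤ a ∧ a ≠ 0 ∧ ∀ x : X, 0 ≤ x → x ≤ a → ∃ t : ℝ, 0 ≤ t ∧ x = t • a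

theorem IsLatticeAtom.exists_eq_smul_of_inf_ne_zero {a b : X} (hb : IsLatticeAtom b)
    (ha : IsLatticeAtom a) (hba : b ⊓ a ≠ 0) : ∃ t : ℝ, 0 ≤ t ∧ b = t • a := by
  have hba0 : 0 ≤ b ⊓ a := le_inf hb.1 ha.1
  obtain ⟨s, hs, hsb⟩ := hb.2.2 _ hba0 inf_le_left
  obtain ⟨r, hr, hra⟩ := ha.2.2 _ hba0 inf_le_right
  have hs0 : s ≠ 0 := by rintro rfl; exact hba (by simpa using hsb)
  refine ⟨s⁻¹ * r, mul_nonneg (inv_nonneg.2 hs) hr, ?_⟩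
  rw [mul_smul, ← hra, hsb, inv_smul_smul₀ hs0]

/-- Otherwise adjoining new disjoint atoms forever produces a disjoint sequence. -/
theorem exists_finset_isLatticeAtom_maximal (hno : ¬ HasDisjointSeq X) :
    ∃ s : Finset X, (∀ a ∈ s, IsLatticeAtom a) ∧ (s : Set X).Pairwise (fun a b => a ⊓ b = 0) ∧
      ∀ b, IsLatticeAtom b → ∃ a ∈ s, b ⊓ a ≠ 0 := by
  classical
  by_contra hc
  push Not at hc
  have hext : ∀ s : Finset X, ∃ b : X, (∀ a ∈ s, IsLatticeAtom a) ∧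
      (s : Set X).Pairwise (fun a b => a ⊓ b = 0) → IsLatticeAtom b ∧ ∀ a ∈ s, b ⊓ a = 0 := by
    intro s
    by_cases hs : (∀ a ∈ s, IsLatticeAtom a) ∧ (s : Set X).Pairwise (fun a b => a ⊓ b = 0)
    · obtain ⟨b, hb⟩ := hc s hs.1 hs.2
      exact ⟨b, fun _ => hb⟩
    · exact ⟨0, fun h => absurd h hs⟩
  choose f hf using hext
  set S : ℕ → Finset X := fun n => (fun s => insert (f s) s)^[n] ∅
  have hS_succ : ∀ n, S (n + 1) = insert (f (S n)) (S n) :=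
    fun n => Function.iterate_succ_apply' _ n ∅
  have hS : ∀ n, (∀ a ∈ S n, IsLatticeAtom a) ∧
      (S n : Set X).Pairwise (fun a b => a ⊓ b = 0) := by
    intro n
    induction n with
    | zero => simp [S]
    | succ n ih =>
      obtain ⟨hatom, hdisj⟩ := hf _ ih
      rw [hS_succ, Finset.coe_insert, Set.pairwise_insert]
      refine ⟨?_, ih.2, fun a ha _ => ⟨hdisj a ha, (inf_comm _ _).trans (hdisj a ha)⟩⟩
      simpa [Finset.mem_insert, forall_eq_or_imp] using ⟨hatom, ih.1⟩
  have hS_mono : Monotone S :=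
    monotone_nat_of_le_succ fun n => hS_succ n ▸ Finset.subset_insert _ _
  refine hno (HasDisjointSeq.of_lt (u := fun n => f (S n))
    (fun n => ⟨(hf _ (hS n)).1.1, (hf _ (hS n)).1.2.1⟩) fun m n hmn => ?_)
  have hm : f (S m) ∈ S n := hS_mono hmn (hS_succ m ▸ Finset.mem_insert_self _ _)
  exact (inf_comm _ _).trans ((hf _ (hS n)).2 _ hm)

theorem ArchimedeanVL.nonpos_of_forall_le_smul [PosSMulMono ℝ X] (hArch : ArchimedeanVL X)
    {d e : X} (he : 0 ≤ e) (h : ∀ ε : ℝ, 0 < ε → d ≤ ε • e) : d ≤ 0 := by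
  refine hArch d e fun n => ?_
  rcases n.eq_zero_or_pos with rfl | hn
  · simpa using he
  · have hn' : (0 : ℝ) < n := by exact_mod_cast hn
    calc n • d = (n : ℝ) • d := (Nat.cast_smul_eq_nsmul ℝ n d).symm
      _ ≤ (n : ℝ) • ((n : ℝ)⁻¹ • e) := smul_le_smul_of_nonneg_left (h _ (inv_pos.2 hn')) hn'.le
      _ = e := smul_inv_smul₀ hn'.ne' e

end Atoms

section VectorLattice

variable {X : Type*} [AddCommGroup X] [Lattice X] [IsOrderedAddMonoid X] [Module ℝ X]
  [PosSMulMono ℝ X]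

theorem inf_smul_eq_zero {a b : X} (ha : 0 ≤ a) (hb : 0 ≤ b) (hab : a ⊓ b = 0) {t : ℝ}
    (ht : 0 ≤ t) : a ⊓ t • b = 0 := by
  refine le_antisymm ?_ (le_inf ha (smul_nonneg ht hb))
  calc a ⊓ t • b ≤ a ⊓ (⌈t⌉₊ : ℝ) • b :=
        inf_le_inf_left a (smul_le_smul_of_nonneg_right (Nat.le_ceil t) hb)
    _ = 0 := by rw [Nat.cast_smul_eq_nsmul]; exact inf_nsmul_eq_zero ha hb hab _

theorem smul_inf_smul_eq_zero {a b : X} (ha : 0 ≤ a) (hb : 0 ≤ b) (hab : a ⊓ b = 0) {s t : ℝ}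
    (hs : 0 ≤ s) (ht : 0 ≤ t) : s • a ⊓ t • b = 0 := by
  rw [inf_comm]
  refine inf_smul_eq_zero (smul_nonneg ht hb) ha ?_ hs
  rw [inf_comm]
  exact inf_smul_eq_zero ha hb hab ht

/-- `(w - t • e)⁺` is disjoint from `(1 - t) • e`, hence from the multiple `μ • e` above it. -/
theorem le_smul_of_inf_le_smul {e w : X} {t μ : ℝ} (he : 0 ≤ e) (ht₀ : 0 ≤ t) (ht : t < 1)
    (hμ : 0 ≤ μ) (hw : w ≤ μ • e) (h : w ⊓ e ≤ t • e) : w ≤ t • e := by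
  let := AddCommGroup.toDistribLattice X
  set a := w - t • e
  have hgap : 0 ≤ (1 - t) • e := smul_nonneg (sub_nonneg.2 ht.le) he
  have hdisj : a⁺ ⊓ (1 - t) • e = 0 := by
    refine le_antisymm ?_ (le_inf (posPart_nonneg a) hgap)
    rw [posPart_def, inf_sup_right, sub_smul, one_smul, ← inf_sub]
    exact sup_le (sub_nonpos.2 h) inf_le_left
  have hdisj' : a⁺ ⊓ μ • e = 0 := by
    have := inf_smul_eq_zero (posPart_nonneg a) hgap hdisj (inv_nonneg.2 (sub_nonneg.2 ht.le))
    rw [inv_smul_smul₀ (sub_ne_zero.2 ht.ne')] at this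
    exact inf_smul_eq_zero (posPart_nonneg a) he this hμ
  have ha : a⁺ ≤ μ • e :=
    sup_le ((sub_le_self _ (smul_nonneg ht₀ he)).trans hw) (smul_nonneg hμ he)
  exact sub_nonpos.1 (posPart_eq_zero.1 (eq_zero_of_inf_eq_zero_of_le hdisj' ha))

theorem ArchimedeanVL.exists_isGreatest_smul_le (hArch : ArchimedeanVL X) {a x : X}
    (ha : 0 ≤ a) (ha0 : a ≠ 0) (hx : 0 ≤ x) :
    ∃ t : ℝ, 0 ≤ t ∧ IsGreatest {s : ℝ | s • a ≤ x} t := by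
  set S : Set ℝ := {s | s • a ≤ x}
  have h0 : (0 : ℝ) ∈ S := by simpa [S] using hx
  have hbdd : BddAbove S := by
    by_contra hS
    refine ha0 (le_antisymm (hArch a x fun n => ?_) ha)
    obtain ⟨s, hs, hns⟩ := not_bddAbove_iff.1 hS n
    calc n • a = (n : ℝ) • a := (Nat.cast_smul_eq_nsmul ℝ n a).symm
      _ ≤ s • a := smul_le_smul_of_nonneg_right hns.le ha
      _ ≤ x := hs
  refine ⟨sSup S, le_csSup hbdd h0, ?_, fun s hs => le_csSup hbdd hs⟩
  change sSup S • a ≤ x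
  rw [← sub_nonpos]
  refine hArch.nonpos_of_forall_le_smul ha fun ε hε => ?_
  obtain ⟨s, hs, hlt⟩ := exists_lt_of_lt_csSup ⟨0, h0⟩ (sub_lt_self (sSup S) hε)
  calc sSup S • a - x ≤ sSup S • a - s • a := sub_le_sub_left hs _
    _ = (sSup S - s) • a := (sub_smul _ _ _).symm
    _ ≤ ε • a := smul_le_smul_of_nonneg_right (by linarith) ha

/-- For `x ∈ [0, e]` and the largest `t` with `t • e ≤ x`, the disjoint parts `a⁺ ⊓ e` and
`a⁻ ⊓ e` of `a = x - (t + ε) • e` cannot both be nonzero; either way `x ≤ (t + ε) • e`. -/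
theorem ArchimedeanVL.isLatticeAtom_of_forall_inf_eq_zero (hArch : ArchimedeanVL X) {e : X}
    (he : 0 ≤ e) (he0 : e ≠ 0)
    (h : ∀ u v : X, 0 ≤ u → 0 ≤ v → u ≤ e → v ≤ e → u ⊓ v = 0 → u = 0 ∨ v = 0) :
    IsLatticeAtom e := by
  refine ⟨he, he0, fun x hx hxe => ?_⟩
  obtain ⟨t, ht, hte, htmax⟩ := hArch.exists_isGreatest_smul_le he he0 hx
  refine ⟨t, ht, le_antisymm ?_ hte⟩
  rw [← sub_nonpos]
  refine hArch.nonpos_of_forall_le_smul he fun ε hε => ?_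
  have hμ : 0 ≤ t + ε := by linarith
  set a := x - (t + ε) • e
  have hdisj : a⁺ ⊓ e ⊓ (a⁻ ⊓ e) = 0 :=
    le_antisymm ((inf_le_inf inf_le_left inf_le_left).trans (posPart_inf_negPart_eq_zero a).le)
      (le_inf (le_inf (posPart_nonneg a) he) (le_inf (negPart_nonneg a) he))
  rcases h _ _ (le_inf (posPart_nonneg a) he) (le_inf (negPart_nonneg a) he) inf_le_right
      inf_le_right hdisj with hpos | hneg
  · have ha : a⁺ ≤ e := sup_le ((sub_le_self _ (smul_nonneg hμ he)).trans hxe) he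
    have : a ≤ 0 := posPart_eq_zero.1 (eq_zero_of_inf_eq_zero_of_le hpos ha)
    calc x - t • e = a + ε • e := by simp only [a, add_smul]; abel
      _ ≤ ε • e := add_le_of_nonpos_left this
  · have ha : a⁻ ≤ (t + ε) • e := by
      rw [negPart_def, neg_sub]
      exact sup_le (sub_le_self _ hx) (smul_nonneg hμ he)
    have hdisj' : a⁻ ⊓ (t + ε) • e = 0 := inf_smul_eq_zero (negPart_nonneg a) he hneg hμ
    have : 0 ≤ a := negPart_eq_zero.1 (eq_zero_of_inf_eq_zero_of_le hdisj' ha)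
    linarith [htmax (sub_nonneg.1 this)]

theorem IsLatticeAtom.exists_smul_le_sub_inf_eq_zero (hArch : ArchimedeanVL X) {a x : X}
    (ha : IsLatticeAtom a) (hx : 0 ≤ x) :
    ∃ t : ℝ, 0 ≤ t ∧ t • a ≤ x ∧ (x - t • a) ⊓ a = 0 := by
  obtain ⟨t, ht, hta, htmax⟩ := hArch.exists_isGreatest_smul_le ha.1 ha.2.1 hx
  refine ⟨t, ht, hta, ?_⟩
  obtain ⟨s, hs, hseq⟩ := ha.2.2 _ (le_inf (sub_nonneg.2 hta) ha.1) inf_le_right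
  have hsa : (t + s) • a ≤ x := by
    rw [add_smul, ← le_sub_iff_add_le', ← hseq]
    exact inf_le_left
  rw [hseq, le_antisymm (by linarith [htmax hsa]) hs, zero_smul]

/-- Otherwise splitting nonzero positive elements below `e` into disjoint nonzero parts forever
produces a disjoint sequence. -/
theorem ArchimedeanVL.exists_isLatticeAtom_le (hArch : ArchimedeanVL X)
    (hno : ¬ HasDisjointSeq X) {e : X} (he : 0 ≤ e) (he0 : e ≠ 0) :
    ∃ a, IsLatticeAtom a ∧ a ≤ e := by
  by_contra hc
  push Not at hc
  have hsplit : ∀ v : X, ∃ p q : X, 0 ≤ v ∧ v ≠ 0 ∧ v ≤ e →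
      (0 ≤ p ∧ p ≠ 0) ∧ (0 ≤ q ∧ q ≠ 0 ∧ q ≤ e) ∧ p ≤ v ∧ q ≤ v ∧ p ⊓ q = 0 := by
    intro v
    by_cases hv : 0 ≤ v ∧ v ≠ 0 ∧ v ≤ e
    · obtain ⟨hv0, hvne, hve⟩ := hv
      have hnot : ¬ ∀ p q : X, 0 ≤ p → 0 ≤ q → p ≤ v → q ≤ v → p ⊓ q = 0 → p = 0 ∨ q = 0 :=
        fun h => hc v (hArch.isLatticeAtom_of_forall_inf_eq_zero hv0 hvne h) hve
      push Not at hnot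
      obtain ⟨p, q, hp, hq, hpv, hqv, hpq, hp0, hq0⟩ := hnot
      exact ⟨p, q, fun _ => ⟨⟨hp, hp0⟩, ⟨hq, hq0, hqv.trans hve⟩, hpv, hqv, hpq⟩⟩
    · exact ⟨0, 0, fun h => absurd h hv⟩
  choose p q hpq using hsplit
  set r : ℕ → X := fun n => q^[n] e
  have hr_succ : ∀ n, r (n + 1) = q (r n) := fun n => Function.iterate_succ_apply' q n e
  have hr : ∀ n, 0 ≤ r n ∧ r n ≠ 0 ∧ r n ≤ e := by
    intro n
    induction n with
    | zero => exact ⟨he, he0, le_rfl⟩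
    | succ n ih => rw [hr_succ]; exact (hpq _ ih).2.1
  have hr_anti : Antitone r :=
    antitone_nat_of_succ_le fun n => hr_succ n ▸ (hpq _ (hr n)).2.2.2.1
  refine hno (HasDisjointSeq.of_lt (u := fun n => p (r n)) (fun n => (hpq _ (hr n)).1)
    fun m n hmn => le_antisymm ?_ (le_inf (hpq _ (hr m)).1.1 (hpq _ (hr n)).1.1))
  calc p (r m) ⊓ p (r n) ≤ p (r m) ⊓ q (r m) := by
        refine inf_le_inf_left _ ((hpq _ (hr n)).2.2.1.trans ?_)
        exact hr_succ m ▸ hr_anti hmn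
    _ = 0 := (hpq _ (hr m)).2.2.2.2

/-- Subtract from `x` its largest multiple of each atom of a maximal disjoint family: the
remainder is disjoint from every atom, so it dominates no atom and vanishes. -/
theorem ArchimedeanVL.exists_finset_nonneg_combination (hArch : ArchimedeanVL X)
    (hno : ¬ HasDisjointSeq X) :
    ∃ s : Finset X, (∀ a ∈ s, 0 ≤ a ∧ a ≠ 0) ∧
      ∀ x, 0 ≤ x → ∃ c : X → ℝ, (∀ a ∈ s, 0 ≤ c a) ∧ x = ∑ a ∈ s, c a • a := by
  obtain ⟨s, hatom, hdisj, hmax⟩ := exists_finset_isLatticeAtom_maximal hno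
  refine ⟨s, fun a ha => ⟨(hatom a ha).1, (hatom a ha).2.1⟩, fun x hx => ?_⟩
  choose! c hc0 hcx hcdisj using
    fun a ha => (hatom a ha).exists_smul_le_sub_inf_eq_zero hArch hx
  refine ⟨c, hc0, ?_⟩
  have hterm : ∀ a ∈ s, 0 ≤ c a • a := fun a ha => smul_nonneg (hc0 a ha) (hatom a ha).1
  have hsum : ∑ a ∈ s, c a • a ≤ x :=
    sum_le_of_pairwise_inf_eq_zero hterm hcx hx fun a ha b hb hab =>
      smul_inf_smul_eq_zero (hatom a ha).1 (hatom b hb).1 (hdisj ha hb hab) (hc0 a ha) (hc0 b hb)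
  set r := x - ∑ a ∈ s, c a • a
  have hr : 0 ≤ r := sub_nonneg.2 hsum
  have hr_disj : ∀ a ∈ s, r ⊓ a = 0 := fun a ha => le_antisymm
    ((inf_le_inf_right a (sub_le_sub_left (Finset.single_le_sum hterm ha) x)).trans
      (hcdisj a ha).le) (le_inf hr (hatom a ha).1)
  rw [← sub_eq_zero]
  by_contra hr0
  obtain ⟨b, hb, hbr⟩ := hArch.exists_isLatticeAtom_le hno hr hr0
  obtain ⟨a, ha, hba⟩ := hmax b hb
  obtain ⟨t, ht, rfl⟩ := hb.exists_eq_smul_of_inf_ne_zero (hatom a ha) hba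
  refine hb.2.1 (eq_zero_of_inf_eq_zero_of_le ?_ hbr)
  rw [inf_comm]
  exact inf_smul_eq_zero hr (hatom a ha).1 (hr_disj a ha) ht

theorem ArchimedeanVL.finiteDimensional_of_not_hasDisjointSeq (hArch : ArchimedeanVL X)
    (hno : ¬ HasDisjointSeq X) : FiniteDimensional ℝ X := by
  obtain ⟨s, -, hcomb⟩ := hArch.exists_finset_nonneg_combination hno
  have hpos : ∀ x : X, 0 ≤ x → x ∈ Submodule.span ℝ (s : Set X) := by
    intro x hx
    obtain ⟨c, -, rfl⟩ := hcomb x hx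
    exact Submodule.sum_mem _ fun a ha => Submodule.smul_mem _ _ (Submodule.subset_span ha)
  refine ⟨⟨s, eq_top_iff.2 fun x _ => ?_⟩⟩
  rw [← posPart_sub_negPart x]
  exact sub_mem (hpos _ (posPart_nonneg x)) (hpos _ (negPart_nonneg x))

/-- `|g i| • u i` is bounded by `∑ j ≠ i, |g j| • u j`, which is disjoint from `u i`. -/
theorem linearIndependent_of_pairwise_inf_eq_zero {ι : Type*} {u : ι → X}
    (hu : ∀ i, 0 ≤ u i ∧ u i ≠ 0) (hdisj : Pairwise fun i j => u i ⊓ u j = 0) :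
    LinearIndependent ℝ u := by
  classical
  rw [linearIndependent_iff']
  intro s g hg i hi
  set w := ∑ j ∈ s.erase i, |g j| • u j
  have hw : 0 ≤ w := Finset.sum_nonneg fun j _ => smul_nonneg (abs_nonneg _) (hu j).1
  have hiw : u i ⊓ w = 0 := inf_sum_eq_zero (hu i).1
    (fun j _ => smul_nonneg (abs_nonneg _) (hu j).1) fun j hj =>
      inf_smul_eq_zero (hu i).1 (hu j).1 (hdisj (Finset.ne_of_mem_erase hj).symm) (abs_nonneg _)
  have hgi : g i • u i = -∑ j ∈ s.erase i, g j • u j := by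
    rw [eq_neg_iff_add_eq_zero, Finset.add_sum_erase s (fun j => g j • u j) hi, hg]
  have hle : ∀ t : ℝ, t = g i ∨ t = -g i → t • u i ≤ w := by
    rintro t (rfl | rfl)
    · rw [hgi, ← Finset.sum_neg_distrib]
      refine Finset.sum_le_sum fun j _ => ?_
      rw [← neg_smul]
      exact smul_le_smul_of_nonneg_right (neg_le_abs _) (hu j).1
    · rw [neg_smul, hgi, neg_neg]
      exact Finset.sum_le_sum fun j _ => smul_le_smul_of_nonneg_right (le_abs_self _) (hu j).1
  have hzero : |g i| • u i = 0 := by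
    refine eq_zero_of_inf_eq_zero_of_le ?_ (hle _ (abs_choice _))
    rw [inf_comm]
    exact inf_smul_eq_zero hw (hu i).1 ((inf_comm _ _).trans hiw) (abs_nonneg _)
  simpa [(hu i).2] using hzero

theorem le_smul_sum_of_eq_sum_smul {s : Finset X} (hs : ∀ a ∈ s, 0 ≤ a) {x : X} {c : X → ℝ}
    (hc : ∀ a ∈ s, 0 ≤ c a) (hx : x = ∑ a ∈ s, c a • a) :
    x ≤ (∑ a ∈ s, c a) • ∑ a ∈ s, a := by
  rw [hx, Finset.sum_smul]
  exact Finset.sum_le_sum fun a ha =>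
    smul_le_smul_of_nonneg_left (Finset.single_le_sum hs ha) (hc a ha)

theorem exists_le_smul_sum_of_isGLB {s : Finset X} (hs : ∀ a ∈ s, 0 ≤ a ∧ a ≠ 0)
    (hcomb : ∀ x, 0 ≤ x → ∃ c : X → ℝ, (∀ a ∈ s, 0 ≤ c a) ∧ x = ∑ a ∈ s, c a • a)
    {Γ : Type*} [Preorder Γ] [Nonempty Γ] [IsDirectedOrder Γ] {z : Γ → X} (hz : Antitone z)
    (hglb : IsGLB (Set.range z) 0) {t : ℝ} (ht : 0 < t) : ∃ γ, z γ ≤ t • ∑ a ∈ s, a := by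
  classical
  have hescape : ∀ a ∈ s, ∃ γ, ¬ t • a ≤ z γ := by
    intro a ha
    by_contra! hall
    have : t • a ≤ 0 := hglb.2 (Set.forall_mem_range.2 hall)
    refine (hs a ha).2 (le_antisymm ?_ (hs a ha).1)
    simpa [ht.ne'] using smul_le_smul_of_nonneg_left this (inv_nonneg.2 ht.le)
  choose! γa hγa using hescape
  obtain ⟨γ, hγ⟩ := Finset.exists_le (s.image γa)
  obtain ⟨c, hc0, hcz⟩ := hcomb (z γ) (hglb.1 ⟨γ, rfl⟩)
  refine ⟨γ, hcz ▸ ?_⟩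
  rw [Finset.smul_sum]
  refine Finset.sum_le_sum fun a ha => smul_le_smul_of_nonneg_right ?_ (hs a ha).1
  by_contra! hlt
  refine hγa a ha ((smul_le_smul_of_nonneg_right hlt.le (hs a ha).1).trans ?_)
  calc c a • a ≤ ∑ b ∈ s, c b • b :=
        Finset.single_le_sum (fun b hb => smul_nonneg (hc0 b hb) (hs b hb).1) ha
    _ = z γ := hcz.symm
    _ ≤ z (γa a) := hz (hγ _ (Finset.mem_image_of_mem γa ha))

theorem ArchimedeanVL.eventuallyOrderBounded_of_uoConvergesTo_zero [FiniteDimensional ℝ X]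
    (hArch : ArchimedeanVL X) {ι : Type*} [Preorder ι] {x : ι → X} (hx : UOConvergesTo x 0) :
    EventuallyOrderBounded x := by
  have hno : ¬ HasDisjointSeq X := fun ⟨u, hu, hdisj⟩ =>
    (linearIndependent_of_pairwise_inf_eq_zero hu hdisj).finite.false
  obtain ⟨s, hs, hcomb⟩ := hArch.exists_finset_nonneg_combination hno
  set e := ∑ a ∈ s, a
  have he : 0 ≤ e := Finset.sum_nonneg fun a ha => (hs a ha).1
  obtain ⟨Γ, _, _, _, z, hz, hglb, hdom⟩ := hx e he
  obtain ⟨γ, hγ⟩ := exists_le_smul_sum_of_isGLB hs hcomb hz hglb (one_half_pos (α := ℝ))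
  obtain ⟨α₀, hα₀⟩ := hdom γ
  refine ⟨α₀, (1 / 2 : ℝ) • e, fun α hα => ?_⟩
  obtain ⟨c, hc0, hc⟩ := hcomb _ (abs_nonneg (x α))
  refine le_smul_of_inf_le_smul he (by norm_num) (by norm_num)
    (Finset.sum_nonneg hc0) (le_smul_sum_of_eq_sum_smul (fun a ha => (hs a ha).1) hc0 hc) ?_
  have := hα₀ α hα
  dsimp only at this
  rw [sub_zero, sub_zero, abs_of_nonneg (le_inf (abs_nonneg _) he)] at this
  exact this.trans hγ

end VectorLattice

def tailBounds {X : Type*} [AddCommGroup X] [Lattice X] {ι : Type*} [Preorder ι] (x : ι → X)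
    (l : X) : Set X :=
  {w | ∃ α₀, ∀ α, α₀ ≤ α → |x α - l| ≤ w}

/-- The tail bounds themselves, ordered by `≥`, serve as the dominating net. -/
theorem oConvergesTo_of_isGLB_tailBounds {X : Type*} [AddCommGroup X] [Lattice X]
    {ι : Type*} [Preorder ι] [IsDirectedOrder ι] {x : ι → X} {l : X}
    (hne : (tailBounds x l).Nonempty) (hglb : IsGLB (tailBounds x l) 0) : OConvergesTo x l := by
  let Γ := {w : Xᵒᵈ // OrderDual.ofDual w ∈ tailBounds x l}
  have hrange : Set.range (fun w : Γ => OrderDual.ofDual w.1) = tailBounds x l :=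
    Set.ext fun w => ⟨by rintro ⟨w, rfl⟩; exact w.2, fun hw => ⟨⟨OrderDual.toDual w, hw⟩, rfl⟩⟩
  refine ⟨Γ, inferInstance, ⟨⟨_, hne.some_mem⟩⟩, ⟨fun w₁ w₂ => ?_⟩,
    fun w => OrderDual.ofDual w.1, fun _ _ h => h, by rwa [hrange], fun w => w.2⟩
  obtain ⟨α₁, h₁⟩ := w₁.2
  obtain ⟨α₂, h₂⟩ := w₂.2
  obtain ⟨α₃, h₁₃, h₂₃⟩ := directed_of (· ≤ ·) α₁ α₂
  refine ⟨⟨OrderDual.toDual (OrderDual.ofDual w₁.1 ⊓ OrderDual.ofDual w₂.1), α₃,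
    fun α hα => le_inf (h₁ α (h₁₃.trans hα)) (h₂ α (h₂₃.trans hα))⟩, ?_, ?_⟩
  · exact inf_le_left (a := OrderDual.ofDual w₁.1)
  · exact inf_le_right (a := OrderDual.ofDual w₁.1)

section LexNet

variable {X : Type*} [AddCommGroup X] [Lattice X] [IsOrderedAddMonoid X]

/-- The admissible `s ∈ D` lie below `y` and are disjoint from a tail of the family. By
induction on `m`, `m • c⁺ + s ≤ y` for all admissible `s`, since `y - m • c⁺ - s` bounds a tail
of the family; the Archimedean property then gives `c⁺ = 0`. -/
theorem ArchimedeanVL.nonpos_of_forall_tail_le (hArch : ArchimedeanVL X) {K : Type*}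
    {u : ℕ → K → X} {y c : X} (hy : 0 ≤ y) (hu : ∀ n k, 0 ≤ u n k) (huy : ∀ n k, u n k ≤ y)
    (hdisj : ∀ m n k l, m ≠ n → u m k ⊓ u n l = 0)
    (hc : ∀ w N, (∀ n k, N < n → u n k ≤ w) → c ≤ w) : c ≤ 0 := by
  set D : Set X := {s | 0 ≤ s ∧ s ≤ y ∧ ∃ N, ∀ n k, N < n → s ⊓ u n k = 0}
  have hD_add : ∀ s ∈ D, ∃ N, ∀ n k, N < n → s + u n k ∈ D := by
    rintro s ⟨hs, hsy, N, hN⟩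
    refine ⟨N, fun n k hn => ⟨add_nonneg hs (hu n k),
      add_le_of_inf_eq_zero (hN n k hn) hsy (huy n k), max N n, fun n' k' hn' => ?_⟩⟩
    rw [inf_comm]
    refine inf_add_eq_zero (hu n' k') hs (hu n k) ?_ (hdisj n' n k' k (by omega))
    rw [inf_comm]
    exact hN n' k' (by omega)
  have key : ∀ m : ℕ, ∀ s ∈ D, m • c⁺ + s ≤ y := by
    intro m
    induction m with
    | zero => intro s hs; simpa using hs.2.1
    | succ m ih =>
      intro s hs
      obtain ⟨N, hN⟩ := hD_add s hs
      have hw : 0 ≤ y - m • c⁺ - s := by rw [sub_sub, sub_nonneg]; exact ih s hs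
      have htail : ∀ n k, N < n → u n k ≤ y - m • c⁺ - s := fun n k hn => by
        rw [sub_sub, le_sub_iff_add_le']
        simpa only [add_assoc] using ih _ (hN n k hn)
      calc (m + 1) • c⁺ + s = m • c⁺ + c⁺ + s := by rw [succ_nsmul]
        _ ≤ m • c⁺ + (y - m • c⁺ - s) + s := by gcongr; exact sup_le (hc _ N htail) hw
        _ = y := by abel
  have h0 : (0 : X) ∈ D := ⟨le_rfl, hy, 0, fun n k _ => inf_eq_left.2 (hu n k)⟩
  exact (le_posPart c).trans (hArch _ y fun m => by simpa using key m 0 h0)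

def lexNet (e : ℕ → X) : ULift.{v} (ℕ ×ₗ ℕ) → X :=
  fun α => (ofLex α.down).2 • e (ofLex α.down).1

theorem lexNet_nonneg {e : ℕ → X} (he : ∀ n, 0 ≤ e n) (α : ULift.{v} (ℕ ×ₗ ℕ)) :
    0 ≤ lexNet e α :=
  nsmul_nonneg (he _) _

theorem ArchimedeanVL.uoConvergesTo_lexNet (hArch : ArchimedeanVL X) {e : ℕ → X}
    (he : ∀ n, 0 ≤ e n) (hdisj : Pairwise fun m n => e m ⊓ e n = 0) :
    UOConvergesTo (lexNet.{v} e) 0 := by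
  intro y hy
  have habs : ∀ α, |(|lexNet e α - 0| ⊓ y) - 0| = lexNet e α ⊓ y := fun α => by
    rw [sub_zero, sub_zero, abs_of_nonneg (lexNet_nonneg he α),
      abs_of_nonneg (le_inf (lexNet_nonneg he α) hy)]
  refine oConvergesTo_of_isGLB_tailBounds ⟨y, ⟨toLex (0, 0)⟩, fun α _ => habs α ▸ inf_le_right⟩
    ⟨?_, fun c hc => ?_⟩
  · rintro w ⟨α₀, hα₀⟩
    exact (abs_nonneg _).trans (hα₀ α₀ le_rfl)
  refine hArch.nonpos_of_forall_tail_le (u := fun n k => k • e n ⊓ y) hy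
    (fun n k => le_inf (nsmul_nonneg (he n) k) hy) (fun n k => inf_le_right)
    (fun m n k l hmn => ?_) fun w N hw => hc ⟨⟨toLex (N + 1, 0)⟩, fun α hα => ?_⟩
  · exact le_antisymm ((inf_le_inf inf_le_left inf_le_left).trans
      (nsmul_inf_nsmul_eq_zero (he m) (he n) (hdisj hmn) k l).le)
      (le_inf (le_inf (nsmul_nonneg (he m) k) hy) (le_inf (nsmul_nonneg (he n) l) hy))
  · obtain ⟨⟨n, k⟩⟩ := α
    rw [habs]
    refine hw n k ?_
    rcases Prod.Lex.le_iff.1 (show toLex (N + 1, 0) ≤ toLex (n, k) from hα) with h | h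
    · exact Nat.lt_of_succ_lt h
    · exact Nat.lt_of_succ_le h.1.le

theorem ArchimedeanVL.not_eventuallyOrderBounded_lexNet (hArch : ArchimedeanVL X) {e : ℕ → X}
    (he : ∀ n, 0 ≤ e n ∧ e n ≠ 0) : ¬ EventuallyOrderBounded (lexNet.{v} e) := by
  rintro ⟨α₀, b, hb⟩
  set n := (ofLex α₀.down).1 + 1
  have hbound : ∀ k : ℕ, k • e n ≤ b := fun k => by
    have := hb ⟨toLex (n, k)⟩ (Prod.Lex.le_iff.2 (Or.inl (Nat.lt_succ_self _)))
    rwa [abs_of_nonneg (lexNet_nonneg (fun n => (he n).1) _)] at this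
  exact (he n).2 (le_antisymm (hArch _ _ hbound) (he n).1)

end LexNet

/-- An Archimedean vector lattice `X` is finite-dimensional iff every uo-null net in `X`
is eventually order bounded in `X`. -/
theorem finiteDimensional_iff_uoNull_eventuallyOrderBounded
    {X : Type u} [AddCommGroup X] [Lattice X]
    [CovariantClass X X (· + ·) (· ≤ ·)] [Module ℝ X] [PosSMulMono ℝ X]
    (hArch : ArchimedeanVL X) :
    FiniteDimensional ℝ X ↔
      ∀ (ι : Type v) (_ : Preorder ι) (_ : Nonempty ι),
        IsDirected ι (· ≤ ·) →
        ∀ x : ι → X, UOConvergesTo x 0 → EventuallyOrderBounded x := by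
  have : IsOrderedAddMonoid X := { add_le_add_left := fun _ _ h c => add_le_add_left h c }
  refine ⟨fun _ _ _ _ _ _ hx => hArch.eventuallyOrderBounded_of_uoConvergesTo_zero hx,
    fun H => ?_⟩
  by_contra hfin
  obtain ⟨e, he, hdisj⟩ : HasDisjointSeq X :=
    not_not.1 fun hno => hfin (hArch.finiteDimensional_of_not_hasDisjointSeq hno)
  exact hArch.not_eventuallyOrderBounded_lexNet he (H _ inferInstance inferInstance
    inferInstance _ (hArch.uoConvergesTo_lexNet (fun n => (he n).1) hdisj))
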